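/- For any real θ ∈ (0, π/2), ∫_0^1 dt / ((4t² + sin⁴θ/cos²θ)·√(1-t²)) = (π/2)·cot²θ/(1 + cos²θ). -/

import Mathlib

/-!
Substituting `t = sin x` and then `u = tan x` turns `∫₀¹ dt / ((a t² + b) √(1 - t²))` into
`∫₀^∞ du / ((a + b) u² + b) = π / (2 √(b (a + b)))`. Undoing the substitutions, the primitive is
`arcsin (√(a + b) t / √(a t² + b)) / √(b (a + b))`; unlike the `arctan` form it is continuous on
all of `[0, 1]`, so the fundamental theorem of calculus applies directly, and the integrand is
integrable because it is a nonnegative derivative. For `a = 4`, `b = sin⁴ θ / cos² θ` we get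
`a + b = ((1 + cos² θ) / cos θ)²` since `sin² θ = 1 - cos² θ`.
-/

open Real intervalIntegral Set MeasureTheory

section
variable {a b : ℝ}

lemma mul_sq_add_pos (hb : 0 < b) (hab : 0 < a + b) {t : ℝ} (ht : t ^ 2 ≤ 1) :
    0 < a * t ^ 2 + b := by
  have hmin := lt_min hb hab
  nlinarith [mul_nonneg (sub_nonneg.2 ht) (sub_nonneg.2 (min_le_left b (a + b))),
    mul_nonneg (sq_nonneg t) (sub_nonneg.2 (min_le_right b (a + b)))]

lemma one_sub_sq_mul_div_sqrt (hab : 0 ≤ a + b) {t : ℝ} (hq : 0 < a * t ^ 2 + b) :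
    1 - (√(a + b) * t / √(a * t ^ 2 + b)) ^ 2 = b * (1 - t ^ 2) / (a * t ^ 2 + b) := by
  rw [div_pow, mul_pow, sq_sqrt hab, sq_sqrt hq.le]
  field_simp
  ring

lemma hasDerivAt_arcsin_mul_div_sqrt (hb : 0 < b) (hab : 0 < a + b) {t : ℝ} (ht : t ^ 2 < 1) :
    HasDerivAt (fun t ↦ arcsin (√(a + b) * t / √(a * t ^ 2 + b)))
      (√b * √(a + b) / ((a * t ^ 2 + b) * √(1 - t ^ 2))) t := by
  set q := √(a * t ^ 2 + b)
  have hq := mul_sq_add_pos hb hab ht.le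
  have h1t : 0 < 1 - t ^ 2 := by linarith
  have hg : HasDerivAt (fun t ↦ √(a + b) * t / √(a * t ^ 2 + b))
      ((√(a + b) * 1 * q - √(a + b) * t * (a * (2 * t) / (2 * q))) / q ^ 2) t := by
    have hq' : HasDerivAt (fun t ↦ a * t ^ 2 + b) (a * (2 * t)) t := by
      simpa using ((hasDerivAt_pow 2 t).const_mul a).const_add b
    exact ((hasDerivAt_id' t).const_mul _).div (hq'.sqrt hq.ne') (sqrt_pos.2 hq).ne'
  have hg_sq : 1 - (√(a + b) * t / q) ^ 2 = b * (1 - t ^ 2) / (a * t ^ 2 + b) :=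
    one_sub_sq_mul_div_sqrt hab.le hq
  have hg_lt : (√(a + b) * t / q) ^ 2 < 1 := by
    have : 0 < b * (1 - t ^ 2) / (a * t ^ 2 + b) := by positivity
    linarith
  have hg1 : √(a + b) * t / q ≠ 1 := by rintro h; rw [h] at hg_lt; norm_num at hg_lt
  have hg2 : √(a + b) * t / q ≠ -1 := by rintro h; rw [h] at hg_lt; norm_num at hg_lt
  refine ((hasDerivAt_arcsin hg2 hg1).comp t hg).congr_deriv ?_
  have hqsq : q ^ 2 = a * t ^ 2 + b := sq_sqrt hq.le
  have hsqrt : √(1 - (√(a + b) * t / q) ^ 2) = √b * √(1 - t ^ 2) / q := by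
    rw [hg_sq, sqrt_div' _ hq.le, sqrt_mul hb.le]
  rw [hsqrt, ← hqsq]
  have := sqrt_pos.2 h1t
  have := sqrt_pos.2 hq
  have := sqrt_pos.2 hb
  field_simp
  rw [sq_sqrt hb.le, hqsq]
  ring

theorem integral_one_div_mul_sqrt_one_sub_sq (hb : 0 < b) (hab : 0 < a + b) :
    ∫ t in (0 : ℝ)..1, 1 / ((a * t ^ 2 + b) * √(1 - t ^ 2)) = π / (2 * √b * √(a + b)) := by
  set F : ℝ → ℝ := fun t ↦ arcsin (√(a + b) * t / √(a * t ^ 2 + b)) / (√b * √(a + b))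
  have hF' : ∀ t ∈ Ioo (0 : ℝ) 1, HasDerivAt F (1 / ((a * t ^ 2 + b) * √(1 - t ^ 2))) t := by
    intro t ht
    have ht2 : t ^ 2 < 1 := by nlinarith [ht.1, ht.2]
    refine ((hasDerivAt_arcsin_mul_div_sqrt hb hab ht2).div_const (√b * √(a + b))).congr_deriv ?_
    rw [div_div_cancel_left' (mul_pos (sqrt_pos.2 hb) (sqrt_pos.2 hab)).ne', one_div]
  have hF : ContinuousOn F (Icc 0 1) := by
    have : ∀ t ∈ Icc (0 : ℝ) 1, √(a * t ^ 2 + b) ≠ 0 := fun t ht ↦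
      (sqrt_pos.2 (mul_sq_add_pos hb hab (by nlinarith [ht.1, ht.2]))).ne'
    fun_prop (disch := assumption)
  have hF'_nonneg : ∀ t ∈ Ioo (0 : ℝ) 1, 0 ≤ 1 / ((a * t ^ 2 + b) * √(1 - t ^ 2)) := fun t ht ↦
    have := mul_sq_add_pos hb hab (t := t) (by nlinarith [ht.1, ht.2])
    by positivity
  have hint : IntervalIntegrable (fun t ↦ 1 / ((a * t ^ 2 + b) * √(1 - t ^ 2))) volume 0 1 :=
    (intervalIntegrable_iff_integrableOn_Ioc_of_le zero_le_one).2
      (integrableOn_deriv_of_nonneg hF hF' hF'_nonneg)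
  rw [integral_eq_sub_of_hasDeriv_right_of_le zero_le_one hF
    (fun t ht ↦ (hF' t ht).hasDerivWithinAt) hint]
  have : √(a + b) ≠ 0 := (sqrt_pos.2 hab).ne'
  simp only [F, mul_zero, zero_div, arcsin_zero, sub_zero, mul_one, one_pow]
  rw [div_self this, arcsin_one, div_div, mul_assoc]

end

theorem integral_lemma_theta (θ : ℝ) (h0 : 0 < θ) (h1 : θ < π / 2) :
    ∫ t in (0 : ℝ)..1,
        1 / ((4 * t ^ 2 + Real.sin θ ^ 4 / Real.cos θ ^ 2) * Real.sqrt (1 - t ^ 2)) =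
      π / 2 * (Real.cos θ / Real.sin θ) ^ 2 / (1 + Real.cos θ ^ 2) := by
  have hs : 0 < sin θ := sin_pos_of_pos_of_lt_pi h0 (by linarith [pi_pos])
  have hc : 0 < cos θ := cos_pos_of_mem_Ioo ⟨by linarith [pi_pos], h1⟩
  have hb : sin θ ^ 4 / cos θ ^ 2 = (sin θ ^ 2 / cos θ) ^ 2 := by ring
  have hab : 4 + sin θ ^ 4 / cos θ ^ 2 = ((1 + cos θ ^ 2) / cos θ) ^ 2 := by
    rw [show sin θ ^ 4 = (sin θ ^ 2) ^ 2 by ring, sin_sq]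
    field_simp
    ring
  rw [integral_one_div_mul_sqrt_one_sub_sq (by positivity) (by positivity), hab, hb,
    sqrt_sq (by positivity), sqrt_sq (by positivity)]
  field_simp
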